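/- arXiv:0807.4116 — 3 statements merged into one kernel-verified Lean document; each statement's English description precedes it below -/
import Mathlib

section
/- For $\chi_1, \chi_2 \in \Xi$, the following are equivalent: (a) there exist $\boldsymbol\pi_1, \boldsymbol\pi_2 \in \mathcal{P}$ with $\chi_i = \chi_{\boldsymbol\pi_i}$ and $\mathbf{r}(\boldsymbol\pi_1) = \mathbf{r}(\boldsymbol\pi_2)$; (b) $\sum_{\epsilon=0}^{m-1} \sigma^\epsilon \circ \chi_1 \circ \sigma^{-\epsilon} = \sum_{\epsilon=0}^{m-1} \sigma^\epsilon \circ \chi_2 \circ \sigma^{-\epsilon}$. -/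
open Polynomial

noncomputable section

variable {I I₀ : Type*}

/-- The weight of 𝛑 ∈ 𝒫 at the spectral parameter `a`: the `i`-th coordinate is the
multiplicity of `a⁻¹` as a root of the `i`-th component. -/
def wtAt (f : I → Polynomial ℂ) (a : ℂ) : I → ℕ := fun i => (f i).rootMultiplicity a⁻¹

open scoped Classical in
/-- The folded components λ(ε) ∈ P⁺_σ of a dominant weight λ ∈ P⁺, for the diagram
automorphism σ (a permutation of the index set I of simple roots) and a choice
ι : I₀ → I of representatives of the σ-orbits of I. -/
def lamComp (σ : Equiv.Perm I) (ι : I₀ → I) (lam : I → ℕ) (ε : ℕ) : I₀ → ℕ :=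
  fun j => if ε ≠ 0 ∧ σ (ι j) = ι j then 0 else lam ((σ ^ ε) (ι j))

open scoped Classical in
/-- The folding map 𝐫 : 𝒫 → 𝒫^σ, defined on a standard factorization
𝛑 = ∏ₖ 𝛑_{λₖ,aₖ} by 𝐫(𝛑) = ∏ₖ∏_ε 𝛑^σ_{λₖ(ε), ζ^ε aₖ}; at a node j fixed by σ the
spectral parameter is raised to the m-th power (the factor a^{(αᵢ,αᵢ)} of [CFS]). -/
def fold [Fintype I] (m : ℕ) (ζ : ℂ) (σ : Equiv.Perm I) (ι : I₀ → I)
    (f : I → Polynomial ℂ) : I₀ → Polynomial ℂ :=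
  fun j =>
    ∏ a ∈ ((∏ i, f i).roots.toFinset.image fun r => r⁻¹),
      ∏ ε ∈ Finset.range m,
        (1 - C ((ζ ^ ε * a) ^ (if σ (ι j) = ι j then m else 1)) * X) ^
          lamComp σ ι (wtAt f a) ε j

/-- The spectral character χ_𝛑 : ℂˣ → P/Q of 𝛑 ∈ 𝒫, where the weight lattice P is
presented as `I → ℤ` and Q ≤ P is the root lattice. -/
def chars (Q : AddSubgroup (I → ℤ)) (f : I → Polynomial ℂ) :
    ℂ → (I → ℤ) ⧸ Q :=
  fun a => QuotientAddGroup.mk (fun i => ((f i).rootMultiplicity a⁻¹ : ℤ))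

/-- The action of the diagram automorphism σ on the weight lattice P = (I → ℤ),
ω_i ↦ ω_{σ(i)}, as an additive endomorphism (here realized by precomposition). -/
def swEnd (σ : Equiv.Perm I) : (I → ℤ) →+ (I → ℤ) :=
  AddMonoidHom.mk' (fun v => fun i => v (σ i)) (fun _ _ => rfl)

/-- The induced action of σ on P/Q. -/
def sigmaBar (σ : Equiv.Perm I) (Q : AddSubgroup (I → ℤ))
    (h : Q ≤ Q.comap (swEnd σ)) : AddMonoid.End ((I → ℤ) ⧸ Q) :=
  QuotientAddGroup.map Q Q (swEnd σ) h

/-! Write `wt π a ∈ P⁺` for the multiplicities of `a⁻¹` as a root of the components of `π`, and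
`T w z = Σ_ε σ^ε (w (ζ^{-ε} z))` for the lift to `P` of `Σ_ε σ^ε ∘ χ ∘ σ^{-ε}`. Comparing root
multiplicities, `𝐫(π₁) = 𝐫(π₂)` iff `T (wt π₁) = T (wt π₂)`: at a node moved by `σ` the
multiplicity of `z⁻¹` in the folded polynomial is `T (wt π) z`, at a fixed node the multiplicity
of `z^{-m}` collects the `m`-th roots of `z^m` and is again `T (wt π) z`, and `T` is
`σ`-equivariant, so the orbit representatives `ι j` see everything. Reducing modulo `Q` gives
(a) ⇒ (b).

Conversely, lift `χ₁, χ₂` to dominant weights `v₁, v₂`. By (b), `d = T v₁ - T v₂` takes values in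
`Q`; being equivariant, `d = T e` for an `e` living on one point of each orbit `ζ^ℤ z`. Writing
`e = (a + e) - a` with `a` and `a + e` dominant and `a` in `Q`, the weights `v₁ + a` and
`v₂ + a + e` still lift `χ₁, χ₂` and have equal images under `T`; any `π₁, π₂` realising them
satisfy (a). -/

section

open Finset

theorem sum_ite_eq_sum_of_support_subset {α M : Type*} [AddCommMonoid M] {s t : Finset α}
    {W : α → M} {p : α → Prop} [DecidablePred p] (hW : ∀ a, W a ≠ 0 → a ∈ s)
    (hp : ∀ a, p a ↔ a ∈ t) : ∑ a ∈ s, (if p a then W a else 0) = ∑ a ∈ t, W a := by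
  rw [← sum_filter]
  refine sum_subset (fun a ha => (hp a).1 (mem_filter.1 ha).2) fun a hat has => ?_
  by_contra hWa
  exact has (mem_filter.2 ⟨hW a hWa, (hp a).2 hat⟩)

theorem Function.Periodic.sum_range_add {M : Type*} [AddCommMonoid M] {h : ℕ → M} {m : ℕ}
    (hh : Function.Periodic h m) (δ : ℕ) :
    ∑ ε ∈ range m, h (δ + ε) = ∑ ε ∈ range m, h ε := by
  conv_rhs => rw [← Nat.image_Ico_mod δ m, sum_image (Nat.mod_injOn_Ico δ m)]
  rw [sum_Ico_eq_sum_range, Nat.add_sub_cancel_left]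
  exact sum_congr rfl fun ε _ => (hh.map_mod_nat _).symm

theorem IsPrimitiveRoot.sum_nthRootsFinset_pow {K M : Type*} [Field K] [AddCommMonoid M]
    {m : ℕ} {ζ : K} (hζ : IsPrimitiveRoot ζ m) {z : K} (hz : z ≠ 0) (W : K → M) :
    ∑ a ∈ nthRootsFinset m (z ^ m), W a = ∑ ε ∈ range m, W (ζ ^ ε * z) := by
  classical
  rw [nthRootsFinset_def, sum_eq_multiset_sum, Multiset.toFinset_val,
    Multiset.dedup_eq_self.2 (hζ.nthRoots_nodup (pow_ne_zero m hz)), hζ.nthRoots_eq rfl,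
    Multiset.map_map]
  rfl

namespace Polynomial

theorem rootMultiplicity_prod {R ι : Type*} [CommRing R] [IsDomain R] {s : Finset ι}
    {p : ι → R[X]} (hp : ∀ k ∈ s, p k ≠ 0) (a : R) :
    rootMultiplicity a (∏ k ∈ s, p k) = ∑ k ∈ s, rootMultiplicity a (p k) := by
  classical
  rw [← count_roots, roots_prod _ _ (prod_ne_zero_iff.2 hp), Multiset.count_bind]
  simp only [count_roots]
  rfl

variable {K : Type*} [Field K]

theorem one_sub_C_mul_X_ne_zero (c : K) : (1 - C c * X : K[X]) ≠ 0 := fun h => by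
  simpa using congrArg (eval 0) h

theorem rootMultiplicity_one_sub_C_mul_X_pow [DecidableEq K] (c w : K) (n : ℕ) :
    rootMultiplicity w ((1 - C c * X) ^ n) = if c * w = 1 then n else 0 := by
  split_ifs with h
  · have hc : c ≠ 0 := left_ne_zero_of_mul_eq_one h
    have hfactor : (1 - C c * X : K[X]) ^ n = C ((-c) ^ n) * (X - C w) ^ n := by
      have hcw : C c * C w = (1 : K[X]) := by rw [← C_mul, h, C_1]
      rw [C_pow, ← mul_pow, C_neg]
      congr 1
      linear_combination -hcw
    rw [hfactor, rootMultiplicity_mul_X_sub_C_pow (by simpa using pow_ne_zero n (neg_ne_zero.2 hc)),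
      rootMultiplicity_C, zero_add]
  · refine rootMultiplicity_eq_zero fun hroot => h ?_
    rw [IsRoot, eval_pow, eval_sub, eval_one, eval_mul, eval_C, eval_X] at hroot
    exact (sub_eq_zero.1 (eq_zero_of_pow_eq_zero hroot)).symm

theorem rootMultiplicity_prod_one_sub_C_mul_X_pow [DecidableEq K] {α : Type*} (s : Finset α)
    (c : α → K) (n : α → ℕ) (w : K) :
    rootMultiplicity w (∏ a ∈ s, (1 - C (c a) * X) ^ n a)
      = ∑ a ∈ s, if c a * w = 1 then n a else 0 := by
  rw [rootMultiplicity_prod fun a _ => pow_ne_zero _ (one_sub_C_mul_X_ne_zero _)]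
  simp only [rootMultiplicity_one_sub_C_mul_X_pow]

theorem eq_of_roots_eq_of_eval_zero_eq [IsAlgClosed K] {p q : K[X]} (hroots : p.roots = q.roots)
    (h0 : p.eval 0 = q.eval 0) (hp0 : p.eval 0 ≠ 0) : p = q := by
  have hp := (IsAlgClosed.splits p).eq_prod_roots
  have hq := (IsAlgClosed.splits q).eq_prod_roots
  rw [← hroots] at hq
  set R := (p.roots.map (X - C ·)).prod
  have hp' : p.eval 0 = p.leadingCoeff * R.eval 0 := by
    conv_lhs => rw [hp]
    rw [eval_mul, eval_C]
  have hq' : q.eval 0 = q.leadingCoeff * R.eval 0 := by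
    conv_lhs => rw [hq]
    rw [eval_mul, eval_C]
  have hlc : p.leadingCoeff = q.leadingCoeff :=
    mul_right_cancel₀ (right_ne_zero_of_mul (hp' ▸ hp0)) (hp'.symm.trans (h0.trans hq'))
  calc p = C p.leadingCoeff * R := hp
    _ = C q.leadingCoeff * R := by rw [hlc]
    _ = q := hq.symm

end Polynomial

section TwistSum

variable {K M : Type*} [Field K]

def twistSum [AddCommMonoid M] (m : ℕ) (ζ : K) (σ : Equiv.Perm I) (W : K → I → M) (z : K) :
    I → M :=
  fun i => ∑ ε ∈ range m, W ((ζ ^ ε)⁻¹ * z) ((σ ^ ε) i)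

variable {m : ℕ} {ζ : K} {σ : Equiv.Perm I}

theorem twistSum_add [AddCommMonoid M] (W₁ W₂ : K → I → M) :
    twistSum m ζ σ (W₁ + W₂) = twistSum m ζ σ W₁ + twistSum m ζ σ W₂ := by
  funext z i
  exact sum_add_distrib

theorem twistSum_natCast (W : K → I → ℕ) :
    twistSum m ζ σ (fun a i => (W a i : ℤ)) = fun z i => ((twistSum m ζ σ W z i : ℕ) : ℤ) := by
  funext z i
  simp [twistSum]

theorem twistSum_apply_zero [AddCommMonoid M] {W : K → I → M} (hW : W 0 = 0) :
    twistSum m ζ σ W 0 = 0 := by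
  funext i
  simp [twistSum, hW]

theorem twistSum_mul_pow [AddCommMonoid M] (hζ : ζ ^ m = 1) (hζ0 : ζ ≠ 0) (hσ : σ ^ m = 1)
    (W : K → I → M) (δ : ℕ) (z : K) (i : I) :
    twistSum m ζ σ W (ζ ^ δ * z) i = twistSum m ζ σ W z ((σ ^ δ) i) := by
  set h : ℕ → M := fun t => W ((ζ ^ t)⁻¹ * (ζ ^ δ * z)) ((σ ^ t) i)
  have hh : Function.Periodic h m := fun t => by simp only [h, pow_add, hζ, hσ, mul_one]
  refine (hh.sum_range_add δ).symm.trans (sum_congr rfl fun ε _ => ?_)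
  simp only [h, add_comm δ ε, pow_add, Equiv.Perm.mul_apply, mul_inv, mul_assoc,
    inv_mul_cancel_left₀ (pow_ne_zero δ hζ0)]

theorem support_twistSum_finite [AddCommMonoid M] (hζ0 : ζ ≠ 0) {W : K → I → M}
    (hW : (Function.support W).Finite) : (Function.support (twistSum m ζ σ W)).Finite := by
  refine (Set.Finite.biUnion (range m).finite_toSet fun ε _ => hW.image (ζ ^ ε * ·)).subset ?_
  intro z hz
  by_contra hout
  refine hz (funext fun i => sum_eq_zero fun ε hε => ?_)
  have hWε : W ((ζ ^ ε)⁻¹ * z) = 0 := by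
    by_contra hne
    exact hout (Set.mem_biUnion hε ⟨_, hne, mul_inv_cancel_left₀ (pow_ne_zero ε hζ0) z⟩)
  rw [hWε]
  rfl

/-- `e` is `d` on one chosen point of each orbit `{ζ ^ ε * z}` (the `m`-th root of `z ^ m` picked
by `Function.invFun`) and `0` elsewhere. -/
theorem exists_twistSum_eq [AddCommMonoid M] (hm : 0 < m) (hζ : IsPrimitiveRoot ζ m)
    {d : K → I → M} (hd : ∀ δ z i, d (ζ ^ δ * z) i = d z ((σ ^ δ) i)) (hd0 : d 0 = 0) :
    ∃ e : K → I → M, twistSum m ζ σ e = d ∧ ∀ z, e z = 0 ∨ e z = d z := by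
  classical
  set r : K → K := fun z => Function.invFun (· ^ m) (z ^ m)
  have hr : ∀ z, r z ^ m = z ^ m := fun z => Function.invFun_eq ⟨z, rfl⟩
  refine ⟨fun z => if r z = z then d z else 0, ?_, fun z => by dsimp only; split_ifs <;> simp⟩
  funext z i
  rcases eq_or_ne z 0 with rfl | hz
  · simp [twistSum, hd0]
  have hζ0 : ζ ≠ 0 := hζ.ne_zero hm.ne'
  have hterm : ∀ ε, (if r ((ζ ^ ε)⁻¹ * z) = (ζ ^ ε)⁻¹ * z then d ((ζ ^ ε)⁻¹ * z) else 0)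
      ((σ ^ ε) i) = if r z = (ζ ^ ε)⁻¹ * z then d z i else 0 := fun ε => by
    have hpow : ((ζ ^ ε)⁻¹ * z) ^ m = z ^ m := by
      rw [mul_pow, inv_pow, pow_right_comm, hζ.pow_eq_one, one_pow, inv_one, one_mul]
    have hrε : r ((ζ ^ ε)⁻¹ * z) = r z := by simp only [r, hpow]
    rw [hrε]
    split_ifs
    · rw [← hd, mul_inv_cancel_left₀ (pow_ne_zero ε hζ0)]
    · rfl
  calc twistSum m ζ σ _ z i = ∑ ε ∈ range m, if r z = (ζ ^ ε)⁻¹ * z then d z i else 0 :=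
        sum_congr rfl fun ε _ => hterm ε
    _ = ∑ a ∈ nthRootsFinset m (z ^ m), if r z = a then d z i else 0 := by
        simp only [hζ.inv.sum_nthRootsFinset_pow hz, inv_pow]
    _ = d z i := by rw [sum_ite_eq, if_pos ((mem_nthRootsFinset hm _).2 (hr z))]

end TwistSum

section DominantWeights

variable {K : Type*}

/-- An element of `𝒫`, seen through its weights `a ↦ wtAt π a`: a finitely supported function
`Kˣ → P⁺`, extended by `0` at `0`. -/
def IsDominantFinsupp [Zero K] (w : K → I → ℤ) : Prop :=
  (∀ z, 0 ≤ w z) ∧ (Function.support w).Finite ∧ w 0 = 0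

theorem IsDominantFinsupp.of_support_subset [Zero K] {β : Type*} [Zero β] {w : K → I → ℤ}
    {e : K → β} (hw : ∀ z, 0 ≤ w z) (hsub : Function.support w ⊆ Function.support e)
    (he : (Function.support e).Finite) (he0 : e 0 = 0) : IsDominantFinsupp w :=
  ⟨hw, he.subset hsub, Function.notMem_support.1 fun h0 => hsub h0 he0⟩

theorem IsDominantFinsupp.add [Zero K] {w₁ w₂ : K → I → ℤ} (h₁ : IsDominantFinsupp w₁)
    (h₂ : IsDominantFinsupp w₂) : IsDominantFinsupp (w₁ + w₂) :=
  ⟨fun z => add_nonneg (h₁.1 z) (h₂.1 z), (h₁.2.1.union h₂.2.1).subset (Function.support_add _ _),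
    by simp [h₁.2.2, h₂.2.2]⟩

variable (Q : AddSubgroup (I → ℤ))

theorem exists_isDominantFinsupp_lift [Zero K]
    (hrep : ∀ c : (I → ℤ) ⧸ Q, ∃ v : I → ℤ, (∀ i, 0 ≤ v i) ∧ (v : (I → ℤ) ⧸ Q) = c)
    {χ : K → (I → ℤ) ⧸ Q} (hχ : (Function.support χ).Finite) (hχ0 : χ 0 = 0) :
    ∃ v : K → I → ℤ, IsDominantFinsupp v ∧ ∀ z, (v z : (I → ℤ) ⧸ Q) = χ z := by
  classical
  choose r hr₀ hr using hrep
  refine ⟨fun z => if χ z = 0 then 0 else r (χ z),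
    .of_support_subset (fun z => ?_) (fun z hz h0 => hz (by simp [h0])) hχ hχ0, fun z => ?_⟩
  · split_ifs
    exacts [le_rfl, hr₀ _]
  · dsimp only
    split_ifs with h
    exacts [h ▸ QuotientAddGroup.mk_zero _, hr _]

/-- Lift `-e⁻` to a dominant `r` and take `a = r + e⁻`, so that `a + e = r + e⁺`. -/
theorem exists_mem_isDominantFinsupp_add [Zero K]
    (hrep : ∀ c : (I → ℤ) ⧸ Q, ∃ v : I → ℤ, (∀ i, 0 ≤ v i) ∧ (v : (I → ℤ) ⧸ Q) = c)
    {e : K → I → ℤ} (he : (Function.support e).Finite) (he0 : e 0 = 0) :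
    ∃ a : K → I → ℤ, IsDominantFinsupp a ∧ IsDominantFinsupp (a + e) ∧ ∀ z, a z ∈ Q := by
  obtain ⟨r, hr, hrQ⟩ := exists_isDominantFinsupp_lift Q hrep
    (χ := fun z => ((-(e z)⁻ : I → ℤ) : (I → ℤ) ⧸ Q))
    (he.subset fun z hz h0 => hz (by simp [h0])) (by simp [he0])
  have hpart : ∀ p : K → I → ℤ, (∀ z, 0 ≤ p z) → (∀ z, e z = 0 → p z = 0) → IsDominantFinsupp p :=
    fun p hp hpe => .of_support_subset hp (fun z hz h0 => hz (hpe z h0)) he he0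
  have hneg := hpart e⁻ (fun z => negPart_nonneg _) fun z h0 => by simp [h0]
  have hpos := hpart e⁺ (fun z => posPart_nonneg _) fun z h0 => by simp [h0]
  refine ⟨r + e⁻, hr.add hneg, ?_, fun z => ?_⟩
  · rw [add_assoc, ← sub_eq_iff_eq_add'.1 (posPart_sub_negPart e)]
    exact hr.add hpos
  · simpa using (QuotientAddGroup.eq_iff_sub_mem.1 (hrQ z))

end DominantWeights

section FoldedCharacters

variable {K : Type*} [Field K] {m : ℕ} {ζ : K} {σ : Equiv.Perm I} {Q : AddSubgroup (I → ℤ)}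
  {hQσ : Q ≤ Q.comap (swEnd σ)}

theorem sigmaBar_pow_mk (ε : ℕ) (v : I → ℤ) :
    (sigmaBar σ Q hQσ ^ ε) v = ((fun i => v ((σ ^ ε) i) : I → ℤ) : (I → ℤ) ⧸ Q) := by
  induction ε generalizing v with
  | zero => rfl
  | succ n ih =>
    have hσ : sigmaBar σ Q hQσ v = ((fun i => v (σ i) : I → ℤ) : (I → ℤ) ⧸ Q) :=
      QuotientAddGroup.map_mk _ _ _ _ v
    rw [AddMonoid.End.coe_pow, Function.iterate_succ_apply, ← AddMonoid.End.coe_pow, hσ, ih,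
      pow_succ']
    rfl

theorem sum_sigmaBar_pow_eq_mk_twistSum {χ : K → (I → ℤ) ⧸ Q} {v : K → I → ℤ}
    (hv : ∀ z, (v z : (I → ℤ) ⧸ Q) = χ z) (z : K) :
    ∑ ε ∈ range m, (sigmaBar σ Q hQσ ^ ε) (χ ((ζ ^ ε)⁻¹ * z))
      = (twistSum m ζ σ v z : (I → ℤ) ⧸ Q) := by
  simp only [← hv, sigmaBar_pow_mk, ← QuotientAddGroup.mk_sum, Finset.sum_fn]
  rfl

theorem exists_isDominantFinsupp_twistSum_eq (hm : 0 < m) (hζ : IsPrimitiveRoot ζ m)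
    (hσ : σ ^ m = 1)
    (hrep : ∀ c : (I → ℤ) ⧸ Q, ∃ v : I → ℤ, (∀ i, 0 ≤ v i) ∧ (v : (I → ℤ) ⧸ Q) = c)
    {χ₁ χ₂ : K → (I → ℤ) ⧸ Q} (hχ₁ : (Function.support χ₁).Finite)
    (hχ₂ : (Function.support χ₂).Finite) (hχ₁0 : χ₁ 0 = 0) (hχ₂0 : χ₂ 0 = 0)
    (h : (fun z => ∑ ε ∈ range m, (sigmaBar σ Q hQσ ^ ε) (χ₁ ((ζ ^ ε)⁻¹ * z)))
      = fun z => ∑ ε ∈ range m, (sigmaBar σ Q hQσ ^ ε) (χ₂ ((ζ ^ ε)⁻¹ * z))) :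
    ∃ w₁ w₂ : K → I → ℤ, IsDominantFinsupp w₁ ∧ IsDominantFinsupp w₂ ∧
      (∀ z, (w₁ z : (I → ℤ) ⧸ Q) = χ₁ z) ∧ (∀ z, (w₂ z : (I → ℤ) ⧸ Q) = χ₂ z) ∧
      twistSum m ζ σ w₁ = twistSum m ζ σ w₂ := by
  have hζ0 : ζ ≠ 0 := hζ.ne_zero hm.ne'
  obtain ⟨v₁, hv₁, hv₁χ⟩ := exists_isDominantFinsupp_lift Q hrep hχ₁ hχ₁0
  obtain ⟨v₂, hv₂, hv₂χ⟩ := exists_isDominantFinsupp_lift Q hrep hχ₂ hχ₂0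
  set d := twistSum m ζ σ v₁ - twistSum m ζ σ v₂
  have hdQ : ∀ z, d z ∈ Q := fun z => by
    have hz := congrFun h z
    rw [sum_sigmaBar_pow_eq_mk_twistSum hv₁χ, sum_sigmaBar_pow_eq_mk_twistSum hv₂χ] at hz
    exact QuotientAddGroup.eq_iff_sub_mem.1 hz
  have hd : ∀ δ z i, d (ζ ^ δ * z) i = d z ((σ ^ δ) i) := fun δ z i => by
    simp only [d, Pi.sub_apply, twistSum_mul_pow hζ.pow_eq_one hζ0 hσ]
  have hd0 : d 0 = 0 := by
    simp only [d, Pi.sub_apply, twistSum_apply_zero hv₁.2.2, twistSum_apply_zero hv₂.2.2, sub_zero]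
  obtain ⟨e, hed, he⟩ := exists_twistSum_eq hm hζ hd hd0
  have hesupp : Function.support e ⊆ Function.support d := fun z hz => by
    rwa [Function.mem_support, ← (he z).resolve_left hz]
  have hdfin : (Function.support d).Finite :=
    ((support_twistSum_finite hζ0 hv₁.2.1).union (support_twistSum_finite hζ0 hv₂.2.1)).subset
      (Function.support_sub _ _)
  obtain ⟨a, ha, hae, haQ⟩ := exists_mem_isDominantFinsupp_add Q hrep (hdfin.subset hesupp)
    ((he 0).elim id (·.trans hd0))
  have heQ : ∀ z, e z ∈ Q := fun z => (he z).elim (fun h0 => h0 ▸ Q.zero_mem) (· ▸ hdQ z)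
  refine ⟨v₁ + a, v₂ + (a + e), hv₁.add ha, hv₂.add hae, fun z => ?_, fun z => ?_, ?_⟩
  · rw [Pi.add_apply, QuotientAddGroup.mk_add, (QuotientAddGroup.eq_zero_iff _).2 (haQ z), add_zero,
      hv₁χ]
  · rw [Pi.add_apply, Pi.add_apply, QuotientAddGroup.mk_add,
      (QuotientAddGroup.eq_zero_iff _).2 (Q.add_mem (haQ z) (heQ z)), add_zero, hv₂χ]
  · rw [twistSum_add, twistSum_add, twistSum_add, hed]
    simp only [d]
    abel

end FoldedCharacters

end

section Fold

variable {m : ℕ} {ζ : ℂ} {σ : Equiv.Perm I} {ι : I₀ → I} {f : I → ℂ[X]}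

theorem wtAt_zero (hf : ∀ i, (f i).coeff 0 = 1) : wtAt f 0 = 0 := by
  funext i
  refine rootMultiplicity_eq_zero fun hroot => ?_
  rw [inv_zero, IsRoot, ← coeff_zero_eq_eval_zero, hf] at hroot
  exact one_ne_zero hroot

theorem mem_image_inv_roots_of_wtAt_ne_zero [Fintype I] (hf : ∀ i, (f i).coeff 0 = 1) {a : ℂ}
    {i : I} (ha : wtAt f a i ≠ 0) : a ∈ (∏ i, f i).roots.toFinset.image fun r => r⁻¹ := by
  have hf0 : ∀ i, f i ≠ 0 := fun i h0 => by simpa [h0] using hf i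
  refine Finset.mem_image.2 ⟨a⁻¹, Multiset.mem_toFinset.2
    ((mem_roots (Finset.prod_ne_zero_iff.2 fun i _ => hf0 i)).2 ?_), inv_inv a⟩
  rw [IsRoot, eval_prod]
  exact Finset.prod_eq_zero (Finset.mem_univ i)
    ((rootMultiplicity_pos (hf0 i)).1 (Nat.pos_of_ne_zero ha))

open scoped Classical in
theorem rootMultiplicity_fold [Fintype I] (w : ℂ) (j : I₀) :
    rootMultiplicity w (fold m ζ σ ι f j)
      = ∑ a ∈ (∏ i, f i).roots.toFinset.image (fun r => r⁻¹), ∑ ε ∈ Finset.range m,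
          if (ζ ^ ε * a) ^ (if σ (ι j) = ι j then m else 1) * w = 1
          then lamComp σ ι (wtAt f a) ε j else 0 := by
  rw [fold, ← Finset.prod_product', rootMultiplicity_prod_one_sub_C_mul_X_pow,
    Finset.sum_product]

theorem rootMultiplicity_fold_of_fixed [Fintype I] (hm : 0 < m) (hζ : IsPrimitiveRoot ζ m)
    (hf : ∀ i, (f i).coeff 0 = 1) {j : I₀} (hfix : σ (ι j) = ι j) {z : ℂ} (hz : z ≠ 0) :
    rootMultiplicity (z ^ m)⁻¹ (fold m ζ σ ι f j) = twistSum m ζ σ (wtAt f) z (ι j) := by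
  have hlam : ∀ a ε, ε ≠ 0 → lamComp σ ι (wtAt f a) ε j = 0 := fun a ε hε => by
    simp [lamComp, hε, hfix]
  rw [rootMultiplicity_fold, if_pos hfix]
  calc _ = ∑ a ∈ (∏ i, f i).roots.toFinset.image (fun r => r⁻¹),
        if a ^ m = z ^ m then wtAt f a (ι j) else 0 := by
        refine Finset.sum_congr rfl fun a _ => ?_
        rw [Finset.sum_eq_single_of_mem 0 (Finset.mem_range.2 hm)
          fun ε _ hε => by rw [hlam a ε hε, ite_self]]
        simp [lamComp, mul_inv_eq_one₀ (pow_ne_zero m hz)]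
    _ = ∑ a ∈ nthRootsFinset m (z ^ m), wtAt f a (ι j) :=
        sum_ite_eq_sum_of_support_subset (fun a ha => mem_image_inv_roots_of_wtAt_ne_zero hf ha)
          fun a => (mem_nthRootsFinset hm _).symm
    _ = twistSum m ζ σ (wtAt f) z (ι j) := by
        simp only [hζ.inv.sum_nthRootsFinset_pow hz, twistSum, inv_pow,
          Equiv.Perm.pow_apply_eq_self_of_apply_eq_self hfix]

theorem rootMultiplicity_fold_of_not_fixed [Fintype I] (hζ0 : ζ ≠ 0)
    (hf : ∀ i, (f i).coeff 0 = 1) {j : I₀} (hfix : σ (ι j) ≠ ι j) {z : ℂ} (hz : z ≠ 0) :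
    rootMultiplicity z⁻¹ (fold m ζ σ ι f j) = twistSum m ζ σ (wtAt f) z (ι j) := by
  rw [rootMultiplicity_fold, if_neg hfix, Finset.sum_comm]
  refine Finset.sum_congr rfl fun ε _ => ?_
  have hp : ∀ a, (ζ ^ ε * a) ^ 1 * z⁻¹ = 1 ↔ a ∈ ({(ζ ^ ε)⁻¹ * z} : Finset ℂ) := fun a => by
    rw [pow_one, mul_inv_eq_one₀ hz, Finset.mem_singleton,
      eq_inv_mul_iff_mul_eq₀ (pow_ne_zero _ hζ0)]
  simp only [lamComp, hfix, and_false, if_false]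
  rw [sum_ite_eq_sum_of_support_subset (fun a ha => mem_image_inv_roots_of_wtAt_ne_zero hf ha) hp,
    Finset.sum_singleton]

open scoped Classical in
theorem rootMultiplicity_fold_eq_twistSum [Fintype I] (hm : 0 < m) (hζ : IsPrimitiveRoot ζ m)
    (hf : ∀ i, (f i).coeff 0 = 1) (j : I₀) {z : ℂ} (hz : z ≠ 0) :
    rootMultiplicity (if σ (ι j) = ι j then (z ^ m)⁻¹ else z⁻¹) (fold m ζ σ ι f j)
      = twistSum m ζ σ (wtAt f) z (ι j) := by
  split_ifs with hfix
  exacts [rootMultiplicity_fold_of_fixed hm hζ hf hfix hz,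
    rootMultiplicity_fold_of_not_fixed (hζ.ne_zero hm.ne') hf hfix hz]

theorem fold_eval_zero [Fintype I] (j : I₀) : (fold m ζ σ ι f j).eval 0 = 1 := by
  simp [fold, eval_prod]

theorem fold_eq_fold_iff [Fintype I] (hm : 0 < m) (hζ : IsPrimitiveRoot ζ m) (hσ : σ ^ m = 1)
    (horb : ∀ i : I, ∃ (j : I₀) (ε : ℕ), i = (σ ^ ε) (ι j)) {f₁ f₂ : I → ℂ[X]}
    (hf₁ : ∀ i, (f₁ i).coeff 0 = 1) (hf₂ : ∀ i, (f₂ i).coeff 0 = 1) :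
    fold m ζ σ ι f₁ = fold m ζ σ ι f₂ ↔ twistSum m ζ σ (wtAt f₁) = twistSum m ζ σ (wtAt f₂) := by
  classical
  have hζ0 : ζ ≠ 0 := hζ.ne_zero hm.ne'
  constructor
  · intro h
    funext z i
    rcases eq_or_ne z 0 with rfl | hz
    · rw [twistSum_apply_zero (wtAt_zero hf₁), twistSum_apply_zero (wtAt_zero hf₂)]
    obtain ⟨j, δ, rfl⟩ := horb i
    have hδz : ζ ^ δ * z ≠ 0 := mul_ne_zero (pow_ne_zero δ hζ0) hz
    rw [← twistSum_mul_pow hζ.pow_eq_one hζ0 hσ, ← twistSum_mul_pow hζ.pow_eq_one hζ0 hσ,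
      ← rootMultiplicity_fold_eq_twistSum hm hζ hf₁ j hδz,
      ← rootMultiplicity_fold_eq_twistSum hm hζ hf₂ j hδz, h]
  · intro h
    funext j
    refine eq_of_roots_eq_of_eval_zero_eq (Multiset.ext.2 fun w => ?_)
      (by rw [fold_eval_zero, fold_eval_zero]) (by rw [fold_eval_zero]; exact one_ne_zero)
    rw [count_roots, count_roots]
    rcases eq_or_ne w 0 with rfl | hw
    · have hnot : ∀ f : I → ℂ[X], ¬ (fold m ζ σ ι f j).IsRoot 0 := fun f hroot => by
        rw [IsRoot, fold_eval_zero] at hroot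
        exact one_ne_zero hroot
      rw [rootMultiplicity_eq_zero (hnot f₁), rootMultiplicity_eq_zero (hnot f₂)]
    obtain ⟨z, hz, rfl⟩ : ∃ z : ℂ, z ≠ 0 ∧ (if σ (ι j) = ι j then (z ^ m)⁻¹ else z⁻¹) = w := by
      split_ifs
      · obtain ⟨y, hy⟩ := IsAlgClosed.exists_pow_nat_eq w⁻¹ hm
        exact ⟨y, fun h0 => inv_ne_zero hw (by rw [← hy, h0, zero_pow hm.ne']), by rw [hy, inv_inv]⟩
      · exact ⟨w⁻¹, inv_ne_zero hw, inv_inv w⟩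
    rw [rootMultiplicity_fold_eq_twistSum hm hζ hf₁ j hz,
      rootMultiplicity_fold_eq_twistSum hm hζ hf₂ j hz, h]

theorem IsDominantFinsupp.exists_wtAt_eq {w : ℂ → I → ℤ} (hw : IsDominantFinsupp w) :
    ∃ f : I → ℂ[X], (∀ i, (f i).coeff 0 = 1) ∧ (fun a i => (wtAt f a i : ℤ)) = w := by
  refine ⟨fun i => ∏ z ∈ hw.2.1.toFinset, (1 - C z * X) ^ (w z i).toNat, fun i => ?_, ?_⟩
  · rw [coeff_zero_eq_eval_zero, eval_prod]
    simp
  funext a i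
  have hsupp : ∀ z, (w z i).toNat ≠ 0 → z ∈ hw.2.1.toFinset := fun z hz => by
    rw [Set.Finite.mem_toFinset, Function.mem_support]
    rintro h
    simp [h] at hz
  rw [wtAt, rootMultiplicity_prod_one_sub_C_mul_X_pow]
  rcases eq_or_ne a 0 with rfl | ha
  · rw [sum_ite_eq_sum_of_support_subset hsupp (t := ∅) (by simp), Finset.sum_empty, hw.2.2]
    rfl
  · rw [sum_ite_eq_sum_of_support_subset hsupp (t := {a})
      (fun z => by rw [mul_inv_eq_one₀ ha, Finset.mem_singleton]), Finset.sum_singleton,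
      Int.toNat_of_nonneg (hw.1 a i)]

end Fold

theorem stmt6_general {I I₀ : Type*} [Fintype I]
    (m : ℕ) (hm : 0 < m) (ζ : ℂ) (hζ : IsPrimitiveRoot ζ m)
    (σ : Equiv.Perm I) (hσm : σ ^ m = 1)
    (ι : I₀ → I)
    (horb : ∀ i : I, ∃ (j : I₀) (ε : ℕ), i = (σ ^ ε) (ι j))
    (Q : AddSubgroup (I → ℤ)) (hQσ : Q ≤ Q.comap (swEnd σ))
    (hrep : ∀ c : (I → ℤ) ⧸ Q, ∃ v : I → ℤ, (∀ i, 0 ≤ v i) ∧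
        (QuotientAddGroup.mk v : (I → ℤ) ⧸ Q) = c)
    (χ₁ χ₂ : ℂ → (I → ℤ) ⧸ Q)
    (hχ₁ : (Function.support χ₁).Finite) (hχ₂ : (Function.support χ₂).Finite)
    (hχ₁0 : χ₁ 0 = 0) (hχ₂0 : χ₂ 0 = 0) :
    (∃ f₁ f₂ : I → Polynomial ℂ,
        (∀ i, (f₁ i).coeff 0 = 1) ∧ (∀ i, (f₂ i).coeff 0 = 1) ∧
        chars Q f₁ = χ₁ ∧ chars Q f₂ = χ₂ ∧
        fold m ζ σ ι f₁ = fold m ζ σ ι f₂) ↔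
    (fun z : ℂ => ∑ ε ∈ Finset.range m, (sigmaBar σ Q hQσ ^ ε) (χ₁ ((ζ ^ ε)⁻¹ * z)))
      = fun z : ℂ => ∑ ε ∈ Finset.range m, (sigmaBar σ Q hQσ ^ ε) (χ₂ ((ζ ^ ε)⁻¹ * z)) := by
  constructor
  · rintro ⟨f₁, f₂, hf₁, hf₂, rfl, rfl, hfold⟩
    funext z
    rw [sum_sigmaBar_pow_eq_mk_twistSum (χ := chars Q f₁) (v := fun a i => wtAt f₁ a i)
        fun _ => rfl,
      sum_sigmaBar_pow_eq_mk_twistSum (χ := chars Q f₂) (v := fun a i => wtAt f₂ a i)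
        fun _ => rfl,
      twistSum_natCast, twistSum_natCast, (fold_eq_fold_iff hm hζ hσm horb hf₁ hf₂).1 hfold]
  · intro h
    obtain ⟨w₁, w₂, hw₁, hw₂, hχw₁, hχw₂, hw⟩ :=
      exists_isDominantFinsupp_twistSum_eq hm hζ hσm hrep hχ₁ hχ₂ hχ₁0 hχ₂0 h
    obtain ⟨f₁, hf₁, rfl⟩ := hw₁.exists_wtAt_eq
    obtain ⟨f₂, hf₂, rfl⟩ := hw₂.exists_wtAt_eq
    refine ⟨f₁, f₂, hf₁, hf₂, funext hχw₁, funext hχw₂,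
      (fold_eq_fold_iff hm hζ hσm horb hf₁ hf₂).2 ?_⟩
    rw [twistSum_natCast, twistSum_natCast] at hw
    funext z i
    exact_mod_cast congrFun (congrFun hw z) i

/-- for χ₁, χ₂ ∈ Ξ the following are equivalent: (a) there exist
𝛑₁, 𝛑₂ ∈ 𝒫 with χᵢ = χ_{𝛑ᵢ} and 𝐫(𝛑₁) = 𝐫(𝛑₂); (b)
Σ_{ε=0}^{m-1} σ^ε ∘ χ₁ ∘ σ^{-ε} = Σ_{ε=0}^{m-1} σ^ε ∘ χ₂ ∘ σ^{-ε}. -/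
theorem stmt6 {I I₀ : Type*} [Fintype I]
    (m : ℕ) (hm : 0 < m) (ζ : ℂ) (hζ : IsPrimitiveRoot ζ m)
    (σ : Equiv.Perm I) (hσm : σ ^ m = 1)
    (ι : I₀ → I) (hinj : Function.Injective ι)
    (horb : ∀ i : I, ∃ (j : I₀) (ε : ℕ), i = (σ ^ ε) (ι j))
    (hsep : ∀ (j j' : I₀) (ε : ℕ), (σ ^ ε) (ι j) = ι j' → j = j')
    (Q : AddSubgroup (I → ℤ)) (hQσ : Q ≤ Q.comap (swEnd σ))
    (hrep : ∀ c : (I → ℤ) ⧸ Q, ∃ v : I → ℤ, (∀ i, 0 ≤ v i) ∧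
        (QuotientAddGroup.mk v : (I → ℤ) ⧸ Q) = c)
    (χ₁ χ₂ : ℂ → (I → ℤ) ⧸ Q)
    (hχ₁ : (Function.support χ₁).Finite) (hχ₂ : (Function.support χ₂).Finite)
    (hχ₁0 : χ₁ 0 = 0) (hχ₂0 : χ₂ 0 = 0) :
    (∃ f₁ f₂ : I → Polynomial ℂ,
        (∀ i, (f₁ i).coeff 0 = 1) ∧ (∀ i, (f₂ i).coeff 0 = 1) ∧
        chars Q f₁ = χ₁ ∧ chars Q f₂ = χ₂ ∧
        fold m ζ σ ι f₁ = fold m ζ σ ι f₂) ↔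
    (fun z : ℂ => ∑ ε ∈ Finset.range m, (sigmaBar σ Q hQσ ^ ε) (χ₁ ((ζ ^ ε)⁻¹ * z)))
      = fun z : ℂ => ∑ ε ∈ Finset.range m, (sigmaBar σ Q hQσ ^ ε) (χ₂ ((ζ ^ ε)⁻¹ * z)) :=
  stmt6_general m hm ζ hζ σ hσm ι horb Q hQσ hrep χ₁ χ₂ hχ₁ hχ₂ hχ₁0 hχ₂0
end
end

section
/- Let $m = 2$, $\lambda, \mu \in P^+_\sigma$, $a \in \mathbb{C}^\times$, and $\eta \in (P^+ - \lambda) \cap (P^- + \sigma(\mu))$. Then $\mathbf{r}(\boldsymbol\pi_{\lambda+\eta, a} \cdot \boldsymbol\pi_{\mu - \sigma(\eta), -a}) = \boldsymbol\pi^\sigma_{\lambda, a} \cdot \boldsymbol\pi^\sigma_{\mu, -a}$. -/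
open Polynomial

noncomputable section

variable {I I₀ : Type*}

/-- 𝛑_{λ,a} = ((1 - a u)^{λ(hᵢ)})ᵢ ∈ 𝒫, for a dominant weight λ. -/
def piLam (lam : I → ℕ) (a : ℂ) : I → Polynomial ℂ := fun i => (1 - C a * X) ^ lam i

/-- 𝛑_{λ,a} for a weight λ given in integer coordinates (dominance is imposed as a
hypothesis where relevant). -/
def piLamZ (v : I → ℤ) (a : ℂ) : I → Polynomial ℂ := fun i => (1 - C a * X) ^ (v i).toNat

/-- The action of the diagram automorphism σ on weights, σ(Σ nᵢ ωᵢ) = Σ nᵢ ω_{σ(i)},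
i.e. (σ·v)(j) = v(σ⁻¹ j). -/
def sw (σ : Equiv.Perm I) (v : I → ℤ) : I → ℤ := fun i => v (σ.symm i)

/-- The embedding P⁺_σ ⊆ P⁺: a dominant weight of 𝔤₀, given by its coordinates on
the orbit representatives ι : I₀ → I, regarded as a dominant weight of 𝔤 (zero on
the remaining nodes). -/
def embwt (ι : I₀ → I) (lam : I₀ → ℕ) : I → ℤ :=
  Function.extend ι (fun j => (lam j : ℤ)) (fun _ => 0)

open scoped Classical in
/-- 𝛑^σ_{κ,b} ∈ 𝒫^σ for κ ∈ P⁺_σ: the component at the node j is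
(1 - b^{(α_j,α_j)} u)^{κ(j)}, with (α_j,α_j) = m at nodes fixed by σ and 1 on
full orbits. -/
def piSig (m : ℕ) (σ : Equiv.Perm I) (ι : I₀ → I) (κ : I₀ → ℕ) (b : ℂ) :
    I₀ → Polynomial ℂ :=
  fun j => (1 - C (b ^ (if σ (ι j) = ι j then m else 1)) * X) ^ κ j

/-!
Writing `v = λ + η` and `w = μ - σ(η)`, the product `𝛑_{v,a} 𝛑_{w,-a}` only has roots at
`a⁻¹` and `(-a)⁻¹`, so `𝐫` sends it to `𝛑^σ_{v(0)+w(1), a} 𝛑^σ_{v(1)+w(0), -a}`. On a free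
orbit `{ι j, σ (ι j)}` the hypotheses force `η (ι j) ≤ 0 ≤ η (σ (ι j))`, so no truncation
occurs and these exponents are exactly `λ j` and `μ j`; at a node fixed by `σ` one has
`(-a)² = a²`, so only the total `λ j + μ j` matters.
-/

lemma one_sub_C_mul_X_pow_ne_zero (a : ℂ) (n : ℕ) : ((1 : ℂ[X]) - C a * X) ^ n ≠ 0 :=
  pow_ne_zero n fun h => by simpa using congrArg (eval 0) h

lemma rootMultiplicity_inv_one_sub_C_mul_X_pow {a : ℂ} (ha : a ≠ 0) (c : ℂ) (n : ℕ) :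
    rootMultiplicity c⁻¹ (((1 : ℂ[X]) - C a * X) ^ n) = if c = a then n else 0 := by
  split_ifs with hc
  · subst hc
    have hfactor : (1 : ℂ[X]) - C c * X = C (-c) * (X - C c⁻¹) := by
      rw [mul_sub, ← C_mul, neg_mul, mul_inv_cancel₀ ha, C_neg, C_neg, C_1]
      ring
    rw [hfactor, mul_pow, ← C_pow, rootMultiplicity_mul_X_sub_C_pow (by simp [ha]),
      rootMultiplicity_C, zero_add]
  · refine rootMultiplicity_eq_zero fun hroot => hc ?_
    have h : 1 - a * c⁻¹ = 0 := by simp at hroot; exact hroot.1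
    rcases eq_or_ne c 0 with rfl | hc0
    · simp at h
    · field_simp at h
      linear_combination h

lemma wtAt_mul {f g : I → ℂ[X]} (hf : ∀ i, f i ≠ 0) (hg : ∀ i, g i ≠ 0) (b : ℂ) :
    wtAt (f * g) b = wtAt f b + wtAt g b :=
  funext fun i => rootMultiplicity_mul (mul_ne_zero (hf i) (hg i))

lemma piLamZ_ne_zero (v : I → ℤ) (a : ℂ) (i : I) : piLamZ v a i ≠ 0 :=
  one_sub_C_mul_X_pow_ne_zero a _

lemma wtAt_piLamZ (v : I → ℤ) {a : ℂ} (ha : a ≠ 0) (b : ℂ) :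
    wtAt (piLamZ v a) b = if b = a then fun i => (v i).toNat else 0 := by
  funext i
  rw [wtAt, piLamZ, rootMultiplicity_inv_one_sub_C_mul_X_pow ha]
  split_ifs <;> rfl

lemma lamComp_zero_weight (σ : Equiv.Perm I) (ι : I₀ → I) (ε : ℕ) : lamComp σ ι 0 ε = 0 := by
  funext j
  simp [lamComp]

lemma mem_image_inv_roots_prod_iff [Fintype I] {f : I → ℂ[X]} (hf : ∀ i, f i ≠ 0) (b : ℂ) :
    b ∈ (∏ i, f i).roots.toFinset.image (fun r => r⁻¹) ↔ wtAt f b ≠ 0 := by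
  have hprod : (∏ i, f i) ≠ 0 := Finset.prod_ne_zero_iff.mpr fun i _ => hf i
  simp only [Finset.mem_image, Multiset.mem_toFinset, mem_roots hprod, IsRoot.def, eval_prod,
    Finset.prod_eq_zero_iff, Finset.mem_univ, true_and, ne_eq, funext_iff, Pi.zero_apply,
    not_forall, wtAt, ← pos_iff_ne_zero, rootMultiplicity_pos (hf _)]
  constructor
  · rintro ⟨r, ⟨i, hi⟩, rfl⟩
    exact ⟨i, by rwa [inv_inv]⟩
  · rintro ⟨i, hi⟩
    exact ⟨b⁻¹, ⟨i, hi⟩, inv_inv b⟩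

open scoped Classical in
lemma fold_eq_prod_of_wtAt_eq_zero [Fintype I] {f : I → ℂ[X]} (hf : ∀ i, f i ≠ 0)
    {S : Finset ℂ} (hS : ∀ b ∉ S, wtAt f b = 0) (m : ℕ) (ζ : ℂ) (σ : Equiv.Perm I)
    (ι : I₀ → I) (j : I₀) :
    fold m ζ σ ι f j = ∏ b ∈ S, ∏ ε ∈ Finset.range m,
      (1 - C ((ζ ^ ε * b) ^ (if σ (ι j) = ι j then m else 1)) * X) ^
        lamComp σ ι (wtAt f b) ε j := by
  refine Finset.prod_subset (fun b hb => ?_) fun b _ hb => ?_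
  · by_contra hbS
    exact (mem_image_inv_roots_prod_iff hf b).mp hb (hS b hbS)
  · rw [mem_image_inv_roots_prod_iff hf, not_not] at hb
    simp [hb, lamComp_zero_weight]

lemma fold_piLamZ_mul_piLamZ_neg [Fintype I] (v w : I → ℤ) {a : ℂ} (ha : a ≠ 0)
    (σ : Equiv.Perm I) (ι : I₀ → I) :
    fold 2 (-1) σ ι (piLamZ v a * piLamZ w (-a)) =
      piSig 2 σ ι (lamComp σ ι (fun i => (v i).toNat) 0 + lamComp σ ι (fun i => (w i).toNat) 1) a *
        piSig 2 σ ι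
          (lamComp σ ι (fun i => (v i).toNat) 1 + lamComp σ ι (fun i => (w i).toNat) 0) (-a) := by
  have hne : a ≠ -a := fun h => ha (by linear_combination h / 2)
  have hf i : (piLamZ v a * piLamZ w (-a)) i ≠ 0 :=
    mul_ne_zero (piLamZ_ne_zero v a i) (piLamZ_ne_zero w (-a) i)
  have hwt b : wtAt (piLamZ v a * piLamZ w (-a)) b =
      (if b = a then fun i => (v i).toNat else 0) + if b = -a then fun i => (w i).toNat else 0 := by
    rw [wtAt_mul (piLamZ_ne_zero v a) (piLamZ_ne_zero w (-a)), wtAt_piLamZ v ha,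
      wtAt_piLamZ w (neg_ne_zero.mpr ha)]
  funext j
  rw [fold_eq_prod_of_wtAt_eq_zero hf (S := {a, -a}), Finset.prod_pair hne]
  · simp only [pow_ite, pow_one, hwt, ↓reduceIte, hne, add_zero, Finset.prod_range_succ,
      Finset.range_one, Finset.prod_singleton, pow_zero, one_mul, neg_mul, even_two, Even.neg_pow,
      mul_neg, hne.symm, zero_add, neg_neg, Pi.mul_apply, piSig, Pi.add_apply, pow_add]
    ring
  · intro b hb
    simp only [Finset.mem_insert, Finset.mem_singleton, not_or] at hb
    simp [hwt, hb.1, hb.2]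

section Weights

variable (σ : Equiv.Perm I) (ι : I₀ → I)

lemma lamComp_zero_apply (κ : I → ℕ) (j : I₀) : lamComp σ ι κ 0 j = κ (ι j) := by
  simp [lamComp]

lemma lamComp_one_apply_of_fixed (κ : I → ℕ) {j : I₀} (hj : σ (ι j) = ι j) :
    lamComp σ ι κ 1 j = 0 := by
  simp [lamComp, hj]

lemma lamComp_one_apply_of_not_fixed (κ : I → ℕ) {j : I₀} (hj : σ (ι j) ≠ ι j) :
    lamComp σ ι κ 1 j = κ (σ (ι j)) := by
  simp [lamComp, hj]

/-- At a node fixed by `σ` only the total exponent matters, because `(-b) ^ 2 = b ^ 2`. -/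
lemma piSig_two_mul_piSig_neg_eq (b : ℂ) {κ κ' lam mu : I₀ → ℕ}
    (hfixed : ∀ j, σ (ι j) = ι j → κ j + κ' j = lam j + mu j)
    (hfree : ∀ j, σ (ι j) ≠ ι j → κ j = lam j ∧ κ' j = mu j) :
    piSig 2 σ ι κ b * piSig 2 σ ι κ' (-b) = piSig 2 σ ι lam b * piSig 2 σ ι mu (-b) := by
  funext j
  simp only [Pi.mul_apply, piSig]
  by_cases hj : σ (ι j) = ι j
  · simp only [if_pos hj, neg_sq, ← pow_add, hfixed j hj]
  · rw [(hfree j hj).1, (hfree j hj).2]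

variable {ι}

lemma embwt_apply_self (hι : Function.Injective ι) (κ : I₀ → ℕ) (j : I₀) :
    embwt ι κ (ι j) = κ j :=
  hι.extend_apply _ _ j

lemma embwt_apply_of_notMem_range {i : I} (hi : i ∉ Set.range ι) (κ : I₀ → ℕ) :
    embwt ι κ i = 0 :=
  Function.extend_apply' _ _ _ hi

lemma sw_apply_of_involutive {σ : Equiv.Perm I} (hσ : Function.Involutive σ) (v : I → ℤ)
    (i : I) : sw σ v i = v (σ i) := by
  rw [sw, σ.symm_apply_eq.mpr (hσ i).symm]

end Weights

theorem stmt7_general {I I₀ : Type*} [Fintype I]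
    (σ : Equiv.Perm I) (hσ : σ * σ = 1)
    (ι : I₀ → I) (hinj : Function.Injective ι)
    (hsep : ∀ j j' : I₀, σ (ι j) = ι j' → ι j = ι j')
    (a : ℂ) (ha : a ≠ 0)
    (lam mu : I₀ → ℕ) (η : I → ℤ)
    (hdom : ∀ i, 0 ≤ embwt ι lam i + η i)
    (hup : ∀ i, η i ≤ sw σ (embwt ι mu) i) :
    fold 2 (-1 : ℂ) σ ι
        (piLamZ (fun i => embwt ι lam i + η i) a *
          piLamZ (fun i => embwt ι mu i - sw σ η i) (-a))
      = piSig 2 σ ι lam a * piSig 2 σ ι mu (-a) := by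
  have hinv : Function.Involutive σ := fun i => by
    rw [← Equiv.Perm.mul_apply, hσ, Equiv.Perm.one_apply]
  rw [fold_piLamZ_mul_piLamZ_neg _ _ ha]
  refine piSig_two_mul_piSig_neg_eq σ ι a (fun j hj => ?_) fun j hj => ?_
  · have hdom_j := hdom (ι j)
    have hup_j := hup (ι j)
    simp only [Pi.add_apply, lamComp_zero_apply, lamComp_one_apply_of_fixed σ ι _ hj,
      sw_apply_of_involutive hinv, hj, embwt_apply_self hinj] at hdom_j hup_j ⊢
    omega
  · have hout : σ (ι j) ∉ Set.range ι := fun ⟨j', hj'⟩ => hj (hsep j j' hj'.symm ▸ hj'.symm)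
    have hdom_j := hdom (ι j)
    have hdom_σj := hdom (σ (ι j))
    have hup_j := hup (ι j)
    have hup_σj := hup (σ (ι j))
    simp only [Pi.add_apply, lamComp_zero_apply, lamComp_one_apply_of_not_fixed σ ι _ hj,
      sw_apply_of_involutive hinv, hinv _, embwt_apply_self hinj,
      embwt_apply_of_notMem_range hout] at hdom_j hdom_σj hup_j hup_σj ⊢
    omega

/-- let m = 2, λ, μ ∈ P⁺_σ, a ∈ ℂˣ, and
η ∈ (P⁺ - λ) ∩ (P⁻ + σ(μ)).  Then
𝐫(𝛑_{λ+η,a} ⬝ 𝛑_{μ-σ(η),-a}) = 𝛑^σ_{λ,a} ⬝ 𝛑^σ_{μ,-a}. -/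
theorem stmt7 {I I₀ : Type*} [Fintype I]
    (σ : Equiv.Perm I) (hσ : σ * σ = 1)
    (ι : I₀ → I) (hinj : Function.Injective ι)
    (horb : ∀ i : I, ∃ j : I₀, i = ι j ∨ i = σ (ι j))
    (hsep : ∀ j j' : I₀, σ (ι j) = ι j' → ι j = ι j')
    (a : ℂ) (ha : a ≠ 0)
    (lam mu : I₀ → ℕ) (η : I → ℤ)
    (hdom : ∀ i, 0 ≤ embwt ι lam i + η i)
    (hup : ∀ i, η i ≤ sw σ (embwt ι mu) i) :
    fold 2 (-1 : ℂ) σ ι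
        (piLamZ (fun i => embwt ι lam i + η i) a *
          piLamZ (fun i => embwt ι mu i - sw σ η i) (-a))
      = piSig 2 σ ι lam a * piSig 2 σ ι mu (-a) :=
  stmt7_general σ hσ ι hinj hsep a ha lam mu η hdom hup

end
end

section
/- Let $m=2$ and suppose $\chi_{\boldsymbol\pi} = \chi_{\lambda,a}$ for some $\lambda \in P^+$, $a \in \mathbb{C}^\times$, and $\boldsymbol\pi \in \mathcal{P}$. Then there exists $\tilde{\boldsymbol\pi} \in \mathcal{P}_{\mathrm{Asym}}$ (i.e. the coordinates $b_i$ of $\tilde{\boldsymbol\pi}$ satisfy $b_i^2 \neq b_j^2$ for $i \neq j$) with $\chi_{\tilde{\boldsymbol\pi}} = \chi_{\lambda,a}$ and $\mathbf{r}(\boldsymbol\pi) = \mathbf{r}(\tilde{\boldsymbol\pi})$. -/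
open Polynomial

noncomputable section

variable {I I₀ : Type*}

/-!
Group the spectral parameters of `f` into pairs `{z, -z}` and pick one representative of each
pair, taking `a` for `{a, -a}`. Moving the weight sitting at `-z` to the representative `z`,
twisted by `σ` (that is, replacing `𝛑_{μ,-z}` by `𝛑_{σμ,z}`), gives an asymmetric `ft`.
The folding map with `ζ = -1` does not see this move, because `σ² = 1` makes the factors of
`𝛑_{μ,-z}` and `𝛑_{σμ,z}` coincide. The spectral character changes only at representatives
`z`, by the `σ`-twist of the weight of `f` at `-z ≠ a`, which lies in `Q` since `χ_f` vanishes
away from `a` and `Q` is `σ`-stable.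
-/

open scoped Classical in
def negRep {α : Type*} [InvolutiveNeg α] (a z : α) : α :=
  if z = a ∨ z = -a then a else @Classical.epsilon α ⟨z⟩ fun x => x = z ∨ x = -z

section NegRep

variable {α : Type*} [InvolutiveNeg α]

theorem negRep_eq_or_eq_neg (a z : α) : negRep a z = z ∨ negRep a z = -z := by
  unfold negRep
  split_ifs with h
  · rcases h with rfl | rfl
    · exact .inl rfl
    · exact .inr (neg_neg _).symm
  · exact Classical.epsilon_spec (p := fun x => x = z ∨ x = -z) ⟨z, .inl rfl⟩

theorem negRep_neg (a z : α) : negRep a (-z) = negRep a z := by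
  have hpair : (fun x : α => x = -z ∨ x = - -z) = fun x => x = z ∨ x = -z := by
    funext x; rw [neg_neg, or_comm]
  have ha : (-z = a ∨ -z = -a) ↔ (z = a ∨ z = -a) := by
    rw [neg_eq_iff_eq_neg, neg_inj, or_comm]
  classical
  unfold negRep
  rw [if_congr ha rfl rfl]
  congr 1
  exact congrArg _ hpair

theorem negRep_self (a : α) : negRep a a = a := by
  simp [negRep]

theorem negRep_negRep (a z : α) : negRep a (negRep a z) = negRep a z := by
  rcases negRep_eq_or_eq_neg a z with h | h <;> rw [h]
  · exact h
  · rw [negRep_neg]; exact h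

variable [DecidableEq α] {a : α} {s : Finset α} {z : α}

theorem negRep_of_mem_image_negRep (hz : z ∈ s.image (negRep a)) : negRep a z = z := by
  obtain ⟨y, -, rfl⟩ := Finset.mem_image.mp hz
  exact negRep_negRep a y

theorem neg_eq_of_mem_image_negRep (hz : z ∈ s.image (negRep a))
    (hnz : -z ∈ s.image (negRep a)) : -z = z := by
  rw [← negRep_of_mem_image_negRep hnz, negRep_neg, negRep_of_mem_image_negRep hz]

theorem mem_or_neg_mem_image_negRep (hz : z ∈ s) :
    z ∈ s.image (negRep a) ∨ -z ∈ s.image (negRep a) := by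
  rcases negRep_eq_or_eq_neg a z with h | h
  · exact .inl (h ▸ Finset.mem_image_of_mem _ hz)
  · exact .inr (h ▸ Finset.mem_image_of_mem _ hz)

theorem neg_notMem_image_negRep (ha : -a ≠ a) : -a ∉ s.image (negRep a) := fun h => by
  rw [← negRep_of_mem_image_negRep h, negRep_neg, negRep_self] at ha
  exact ha rfl

theorem disjoint_image_negRep_image_neg (hs : ∀ z ∈ s, -z ≠ z) :
    Disjoint (s.image (negRep a)) ((s.image (negRep a)).image Neg.neg) := by
  refine Finset.disjoint_left.mpr fun z hz hnz => ?_
  obtain ⟨w, hw, rfl⟩ := Finset.mem_image.mp hnz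
  have hw_neg : w = -w := by
    simpa using neg_eq_of_mem_image_negRep hz (by rwa [neg_neg])
  obtain ⟨y, hy, rfl⟩ := Finset.mem_image.mp hw
  rcases negRep_eq_or_eq_neg a y with h | h <;> rw [h] at hw_neg
  · exact hs y hy hw_neg.symm
  · exact hs y hy (by rw [hw_neg, neg_neg])

end NegRep

theorem Finset.prod_union_image_neg {α M : Type*} [InvolutiveNeg α] [DecidableEq α]
    [CommMonoid M] {T : Finset α} (hT : Disjoint T (T.image Neg.neg)) (g : α → M) :
    ∏ b ∈ T ∪ T.image Neg.neg, g b = ∏ z ∈ T, g z * g (-z) := by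
  rw [Finset.prod_union hT, Finset.prod_image neg_injective.injOn, Finset.prod_mul_distrib]

theorem Polynomial.rootMultiplicity_prod_s11 {R ι : Type*} [CommRing R] [IsDomain R]
    (s : Finset ι) (p : ι → R[X]) (hp : ∏ i ∈ s, p i ≠ 0) (x : R) :
    (∏ i ∈ s, p i).rootMultiplicity x = ∑ i ∈ s, (p i).rootMultiplicity x := by
  classical
  simp only [← count_roots, roots_prod p s hp, Multiset.count_bind]
  rfl

theorem Polynomial.roots_one_sub_C_mul_X {K : Type*} [Field K] {b : K} (hb : b ≠ 0) :
    (1 - C b * X).roots = {b⁻¹} := by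
  have h : (1 - C b * X : K[X]) = C (-b) * X + C 1 := by simp; ring
  rw [h, roots_C_mul_X_add_C _ (neg_ne_zero.mpr hb)]
  simp [inv_neg]

theorem Polynomial.rootMultiplicity_one_sub_C_mul_X_pow_s11 {K : Type*} [Field K] [DecidableEq K]
    {b : K} (hb : b ≠ 0) (n : ℕ) (x : K) :
    ((1 - C b * X) ^ n).rootMultiplicity x = if x = b⁻¹ then n else 0 := by
  rw [← count_roots, roots_pow, roots_one_sub_C_mul_X hb, Multiset.count_nsmul,
    Multiset.count_singleton]
  split_ifs <;> simp

theorem Polynomial.one_sub_C_mul_X_ne_zero_s11 {R : Type*} [CommRing R] [Nontrivial R] (b : R) :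
    (1 - C b * X : R[X]) ≠ 0 := fun h => by
  simpa using congrArg (eval 0) h

open scoped Classical in
def invRoots [Fintype I] (g : I → ℂ[X]) : Finset ℂ :=
  (∏ i, g i).roots.toFinset.image fun r => r⁻¹

theorem mem_invRoots_iff [Fintype I] {g : I → ℂ[X]} (hg : ∀ i, (g i).coeff 0 = 1) (z : ℂ) :
    z ∈ invRoots g ↔ wtAt g z ≠ 0 := by
  have hg0 : ∀ i, g i ≠ 0 := fun i h => by simpa [h] using hg i
  have hprod : ∏ i, g i ≠ 0 := Finset.prod_ne_zero_iff.mpr fun i _ => hg0 i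
  simp only [invRoots, Finset.mem_image, Multiset.mem_toFinset, inv_eq_iff_eq_inv,
    exists_eq_right, mem_roots hprod, IsRoot.def, eval_prod, Finset.prod_eq_zero_iff,
    Finset.mem_univ, true_and, wtAt, ne_eq, funext_iff, Pi.zero_apply, not_forall,
    rootMultiplicity_eq_zero_iff, hg0, imp_false, not_not]

theorem zero_notMem_invRoots [Fintype I] {g : I → ℂ[X]} (hg : ∀ i, (g i).coeff 0 = 1) :
    (0 : ℂ) ∉ invRoots g := by
  rw [mem_invRoots_iff hg, not_not]
  funext i
  simp [wtAt, rootMultiplicity_eq_zero_iff, IsRoot.def, ← coeff_zero_eq_eval_zero, hg]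

open scoped Classical in
def foldFactor (m : ℕ) (ζ : ℂ) (σ : Equiv.Perm I) (ι : I₀ → I) (u : I → ℕ) (b : ℂ) (j : I₀) :
    ℂ[X] :=
  ∏ ε ∈ Finset.range m,
    (1 - C ((ζ ^ ε * b) ^ (if σ (ι j) = ι j then m else 1)) * X) ^ lamComp σ ι u ε j

theorem fold_eq_prod_foldFactor [Fintype I] (m : ℕ) (ζ : ℂ) (σ : Equiv.Perm I) (ι : I₀ → I)
    {g : I → ℂ[X]} (hg : ∀ i, (g i).coeff 0 = 1) {B : Finset ℂ}
    (hB : ∀ z, wtAt g z ≠ 0 → z ∈ B) (j : I₀) :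
    fold m ζ σ ι g j = ∏ b ∈ B, foldFactor m ζ σ ι (wtAt g b) b j := by
  refine Finset.prod_subset (fun z hz => hB z ((mem_invRoots_iff hg z).mp hz)) fun z _ hz => ?_
  simp [(mem_invRoots_iff hg z).not_left.mp hz, lamComp]

theorem foldFactor_zero (m : ℕ) (ζ : ℂ) (σ : Equiv.Perm I) (ι : I₀ → I) (b : ℂ) (j : I₀) :
    foldFactor m ζ σ ι 0 b j = 1 := by
  simp [foldFactor, lamComp]

theorem sw_eq_comp_of_mul_self_eq_one {σ : Equiv.Perm I} (hσ : σ * σ = 1) (v : I → ℤ) :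
    sw σ v = v ∘ σ := by
  have hσ' : σ⁻¹ = σ := (mul_eq_one_iff_eq_inv.mp hσ).symm
  change v ∘ σ.symm = v ∘ σ
  rw [← Equiv.Perm.inv_def, hσ']

theorem foldFactor_add_comp (σ : Equiv.Perm I) (hσ : σ * σ = 1) (ι : I₀ → I) (u v : I → ℕ)
    (z : ℂ) (j : I₀) :
    foldFactor 2 (-1) σ ι (u + v ∘ σ) z j =
      foldFactor 2 (-1) σ ι u z j * foldFactor 2 (-1) σ ι v (-z) j := by
  have hσσ : σ (σ (ι j)) = ι j := by rw [← Equiv.Perm.mul_apply, hσ, Equiv.Perm.one_apply]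
  by_cases hfix : σ (ι j) = ι j
  · simp [foldFactor, lamComp, hfix, pow_add]
  · simp only [foldFactor, hfix, ↓reduceIte, pow_one, map_mul, map_pow, map_neg, map_one,
      lamComp, ne_eq, and_false, Pi.add_apply, Function.comp_apply, pow_add,
      Finset.prod_range_succ, Finset.range_one, Finset.prod_singleton, pow_zero, one_mul,
      Equiv.Perm.coe_one, id_eq, neg_mul, sub_neg_eq_add, hσσ, mul_neg]
    ring

open scoped Classical in
def asymRoots [Fintype I] (a : ℂ) (f : I → ℂ[X]) : Finset ℂ :=
  (invRoots f).image (negRep a)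

def asymmetrize [Fintype I] (σ : Equiv.Perm I) (a : ℂ) (f : I → ℂ[X]) : I → ℂ[X] :=
  fun i => ∏ b ∈ asymRoots a f, (1 - C b * X) ^ (wtAt f b i + wtAt f (-b) (σ i))

section Asymmetrize

variable [Fintype I] {σ : Equiv.Perm I} {a : ℂ} {f : I → ℂ[X]}

theorem asymmetrize_coeff_zero (i : I) : (asymmetrize σ a f i).coeff 0 = 1 := by
  simp [asymmetrize, coeff_zero_eq_eval_zero, eval_prod]

theorem disjoint_asymRoots_image_neg (hf : ∀ i, (f i).coeff 0 = 1) :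
    Disjoint (asymRoots a f) ((asymRoots a f).image Neg.neg) := by
  classical
  refine disjoint_image_negRep_image_neg fun z hz => ?_
  rw [ne_eq, CharZero.neg_eq_self_iff]
  exact ne_of_mem_of_not_mem hz (zero_notMem_invRoots hf)

theorem zero_notMem_asymRoots (hf : ∀ i, (f i).coeff 0 = 1) :
    (0 : ℂ) ∉ asymRoots a f := fun h =>
  Finset.disjoint_left.mp (disjoint_asymRoots_image_neg hf) h
    (Finset.mem_image.mpr ⟨0, h, neg_zero⟩)

open scoped Classical in
theorem wtAt_asymmetrize (hf : ∀ i, (f i).coeff 0 = 1) (z : ℂ) :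
    wtAt (asymmetrize σ a f) z =
      if z ∈ asymRoots a f then wtAt f z + wtAt f (-z) ∘ σ else 0 := by
  have hT := zero_notMem_asymRoots (a := a) hf
  funext i
  have hne : ∏ b ∈ asymRoots a f, (1 - C b * X) ^ (wtAt f b i + wtAt f (-b) (σ i)) ≠ 0 :=
    Finset.prod_ne_zero_iff.mpr fun b _ => pow_ne_zero _ (one_sub_C_mul_X_ne_zero_s11 b)
  change (∏ b ∈ _, _ : ℂ[X]).rootMultiplicity z⁻¹ = _
  rw [rootMultiplicity_prod_s11 _ _ hne, Finset.sum_congr rfl fun b hb =>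
    rootMultiplicity_one_sub_C_mul_X_pow_s11 (ne_of_mem_of_not_mem hb hT) _ z⁻¹]
  simp only [inv_inj, Finset.sum_ite_eq, ite_apply]
  rfl

theorem mem_asymRoots_of_wtAt_asymmetrize_ne_zero (hf : ∀ i, (f i).coeff 0 = 1) {z : ℂ}
    (hz : wtAt (asymmetrize σ a f) z ≠ 0) : z ∈ asymRoots a f := by
  classical
  by_contra h
  rw [wtAt_asymmetrize hf, if_neg h] at hz
  exact hz rfl

theorem asymmetrize_asym (hf : ∀ i, (f i).coeff 0 = 1) (b c : ℂ)
    (hb : wtAt (asymmetrize σ a f) b ≠ 0) (hc : wtAt (asymmetrize σ a f) c ≠ 0)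
    (hbc : b ^ 2 = c ^ 2) : b = c := by
  replace hb := mem_asymRoots_of_wtAt_asymmetrize_ne_zero hf hb
  replace hc := mem_asymRoots_of_wtAt_asymmetrize_ne_zero hf hc
  rcases sq_eq_sq_iff_eq_or_eq_neg.mp hbc with h | rfl
  · exact h
  · exact absurd (Finset.mem_image_of_mem _ hc) (Finset.disjoint_left.mp
      (disjoint_asymRoots_image_neg hf) hb)

theorem chars_asymmetrize (hσ : σ * σ = 1) {Q : AddSubgroup (I → ℤ)}
    (hQσ : ∀ v ∈ Q, sw σ v ∈ Q) (ha : a ≠ 0) (hf : ∀ i, (f i).coeff 0 = 1)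
    (hQ : ∀ z ≠ a, (fun i => (wtAt f z i : ℤ)) ∈ Q) :
    chars Q (asymmetrize σ a f) = chars Q f := by
  classical
  funext z
  change QuotientAddGroup.mk (fun i => (wtAt _ z i : ℤ)) =
    QuotientAddGroup.mk (fun i => (wtAt f z i : ℤ))
  rw [wtAt_asymmetrize hf]
  split_ifs with hz
  · have hza : -z ≠ a := fun h => by
      have ha' : -a ≠ a := by rwa [ne_eq, CharZero.neg_eq_self_iff]
      obtain rfl : z = -a := by rw [← h, neg_neg]
      exact neg_notMem_image_negRep ha' hz
    have hσz := hQσ _ (hQ _ hza)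
    rw [sw_eq_comp_of_mul_self_eq_one hσ] at hσz
    rw [eq_comm, QuotientAddGroup.eq]
    convert hσz using 1
    funext i
    simp
  · have h0 : (fun i => ((0 : I → ℕ) i : ℤ)) = 0 := rfl
    rw [h0, QuotientAddGroup.mk_zero, eq_comm, QuotientAddGroup.eq_zero_iff]
    by_cases hza : z = a
    · rw [hza] at hz ⊢
      have ha_root : a ∉ invRoots f := fun h => by
        have := Finset.mem_image_of_mem (negRep a) h
        rw [negRep_self] at this
        exact hz this
      rw [(mem_invRoots_iff hf a).not_left.mp ha_root]
      exact zero_mem Q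
    · exact hQ z hza

theorem fold_asymmetrize (hσ : σ * σ = 1) (ι : I₀ → I) (hf : ∀ i, (f i).coeff 0 = 1) :
    fold 2 (-1) σ ι (asymmetrize σ a f) = fold 2 (-1) σ ι f := by
  classical
  set T := asymRoots a f
  have hT := disjoint_asymRoots_image_neg (a := a) hf
  have hft : ∀ z, wtAt (asymmetrize σ a f) z ≠ 0 → z ∈ T ∪ T.image Neg.neg := fun z hz =>
    Finset.mem_union_left _ (mem_asymRoots_of_wtAt_asymmetrize_ne_zero hf hz)
  have hf' : ∀ z, wtAt f z ≠ 0 → z ∈ T ∪ T.image Neg.neg := fun z hz => by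
    rcases mem_or_neg_mem_image_negRep (a := a) ((mem_invRoots_iff hf z).mpr hz) with h | h
    · exact Finset.mem_union_left _ h
    · exact Finset.mem_union_right _ (Finset.mem_image.mpr ⟨-z, h, neg_neg z⟩)
  funext j
  rw [fold_eq_prod_foldFactor _ _ _ _ asymmetrize_coeff_zero hft,
    fold_eq_prod_foldFactor _ _ _ _ hf hf', Finset.prod_union_image_neg hT,
    Finset.prod_union_image_neg hT]
  refine Finset.prod_congr rfl fun z hz => ?_
  have hnz : -z ∉ T := fun h => Finset.disjoint_left.mp hT h
    (Finset.mem_image.mpr ⟨z, hz, rfl⟩)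
  rw [wtAt_asymmetrize hf, if_pos hz, wtAt_asymmetrize hf, if_neg hnz, foldFactor_zero, mul_one,
    foldFactor_add_comp σ hσ]

end Asymmetrize

open scoped Classical in
theorem stmt11_general {I I₀ : Type*} [Fintype I]
    (σ : Equiv.Perm I) (hσ : σ * σ = 1)
    (ι : I₀ → I)
    (Q : AddSubgroup (I → ℤ)) (hQσ : ∀ v ∈ Q, sw σ v ∈ Q)
    (f : I → Polynomial ℂ) (hf : ∀ i, (f i).coeff 0 = 1)
    (lam : I → ℕ) (a : ℂ) (ha : a ≠ 0)
    (hch : chars Q f = fun z => if z = a then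
        (QuotientAddGroup.mk (fun i => (lam i : ℤ)) : (I → ℤ) ⧸ Q) else 0) :
    ∃ ft : I → Polynomial ℂ,
      (∀ i, (ft i).coeff 0 = 1) ∧
      (∀ b c : ℂ, wtAt ft b ≠ 0 → wtAt ft c ≠ 0 → b ^ 2 = c ^ 2 → b = c) ∧
      chars Q ft = chars Q f ∧
      fold 2 (-1 : ℂ) σ ι ft = fold 2 (-1 : ℂ) σ ι f := by
  have hQ : ∀ z ≠ a, (fun i => (wtAt f z i : ℤ)) ∈ Q := fun z hz =>
    (QuotientAddGroup.eq_zero_iff _).mp ((congrFun hch z).trans (if_neg hz))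
  exact ⟨asymmetrize σ a f, asymmetrize_coeff_zero, asymmetrize_asym hf,
    chars_asymmetrize hσ hQσ ha hf hQ, fold_asymmetrize hσ ι hf⟩

open scoped Classical in
/-- let m = 2 and suppose χ_𝛑 = χ_{λ,a} for some λ ∈ P⁺, a ∈ ℂˣ and
𝛑 ∈ 𝒫.  Then there exists 𝛑̃ ∈ 𝒫_Asym (i.e. the coordinates bᵢ of 𝛑̃ satisfy
bᵢ² ≠ bⱼ² for i ≠ j) with χ_𝛑̃ = χ_{λ,a} and 𝐫(𝛑) = 𝐫(𝛑̃).  The root lattice Q is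
required to be stable under the diagram automorphism. -/
theorem stmt11 {I I₀ : Type*} [Fintype I]
    (σ : Equiv.Perm I) (hσ : σ * σ = 1)
    (ι : I₀ → I) (hinj : Function.Injective ι)
    (horb : ∀ i : I, ∃ j : I₀, i = ι j ∨ i = σ (ι j))
    (hsep : ∀ j j' : I₀, σ (ι j) = ι j' → ι j = ι j')
    (Q : AddSubgroup (I → ℤ)) (hQσ : ∀ v ∈ Q, sw σ v ∈ Q)
    (f : I → Polynomial ℂ) (hf : ∀ i, (f i).coeff 0 = 1)
    (lam : I → ℕ) (a : ℂ) (ha : a ≠ 0)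
    (hch : chars Q f = fun z => if z = a then
        (QuotientAddGroup.mk (fun i => (lam i : ℤ)) : (I → ℤ) ⧸ Q) else 0) :
    ∃ ft : I → Polynomial ℂ,
      (∀ i, (ft i).coeff 0 = 1) ∧
      (∀ b c : ℂ, wtAt ft b ≠ 0 → wtAt ft c ≠ 0 → b ^ 2 = c ^ 2 → b = c) ∧
      chars Q ft = chars Q f ∧
      fold 2 (-1 : ℂ) σ ι ft = fold 2 (-1 : ℂ) σ ι f :=
  stmt11_general σ hσ ι Q hQσ f hf lam a ha hch

end
end
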